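/- arXiv:1403.5085 — 3 statements merged into one kernel-verified Lean document; each statement's English description precedes it below -/
import Mathlib

section
/- Let a > 0, b < 0, b_X ≠ 0, and define the 2×2 matrix A = [[−a, 1],[0, 0]] and the row vector C = [γ₁(1), γ₂(1)] with γ₁(x) = (b_X/a)(e^{-(a/b)x} − 1) and γ₂(x) = −(b_X/(b a)) x + (b_X/a²)(1 − e^{-(a/b)x}). Then the determinant of the observability matrix [C; C·A] equals γ₁(1)·(γ₁(1) + a·γ₂(1)), which is nonzero; hence the pair (A, C) is observable. -/
theorem stmt1 (a b bX : ℝ) (ha : 0 < a) (hb : b < 0) (hbX : bX ≠ 0)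
    (γ1 γ2 : ℝ → ℝ)
    (hγ1 : ∀ x : ℝ, γ1 x = (bX / a) * (Real.exp (-(a / b) * x) - 1))
    (hγ2 : ∀ x : ℝ, γ2 x = -(bX / (b * a)) * x + (bX / a ^ 2) * (1 - Real.exp (-(a / b) * x)))
    (A : Matrix (Fin 2) (Fin 2) ℝ) (hA : A = !![-a, 1; 0, 0])
    (C : Matrix (Fin 1) (Fin 2) ℝ) (hC : C = !![γ1 1, γ2 1])
    (O : Matrix (Fin 2) (Fin 2) ℝ)
    (hO : O = !![C 0 0, C 0 1; (C * A) 0 0, (C * A) 0 1]) :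
    O.det = γ1 1 * (γ1 1 + a * γ2 1) ∧ O.det ≠ 0 ∧ IsUnit O := by
  have ha' : a ≠ 0 := ha.ne'
  have hb' : b ≠ 0 := hb.ne
  have ht : (0:ℝ) < -(a/b) := by
    have : a / b < 0 := div_neg_of_pos_of_neg ha hb
    linarith
  have hex : 0 < Real.exp (-(a/b) * 1) - 1 := by
    rw [mul_one]
    nlinarith [Real.add_one_le_exp (-(a/b))]
  have hγ1ne : γ1 1 ≠ 0 := by
    rw [hγ1]
    exact mul_ne_zero (div_ne_zero hbX ha') (ne_of_gt hex)
  have hsum : γ1 1 + a * γ2 1 = -bX / b := by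
    rw [hγ1, hγ2]
    field_simp
    ring
  have hsumne : γ1 1 + a * γ2 1 ≠ 0 := by
    rw [hsum]
    exact div_ne_zero (neg_ne_zero.mpr hbX) hb'
  have hdet : O.det = γ1 1 * (γ1 1 + a * γ2 1) := by
    subst hO hA hC
    simp [Matrix.det_fin_two, Matrix.mul_apply, Fin.sum_univ_two]
    ring
  have hdne : O.det ≠ 0 := by
    rw [hdet]; exact mul_ne_zero hγ1ne hsumne
  exact ⟨hdet, hdne, (Matrix.isUnit_iff_isUnit_det O).mpr (isUnit_iff_ne_zero.mpr hdne)⟩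
end

section
/- If (A, C) with A ∈ ℝ^{2×2}, C ∈ ℝ^{1×2} is observable (the matrix with rows C and C·A is invertible), then there exists L ∈ ℝ^{2×1} such that all eigenvalues of A − L·C have negative real part. -/
/-!
For `A - L * C` both the trace and the determinant are affine in the two entries of `L`, and the
linear part of this map `L ↦ (trace, det)` has, up to sign, the observability determinant. So
observability lets us assign any characteristic polynomial `X ^ 2 - t X + d`; choosing `(X + 1) ^ 2`
puts the only eigenvalue at `-1`.
-/

namespace Matrix

variable {K : Type*} [Field K]

theorem mem_spectrum_iff_fin_two (M : Matrix (Fin 2) (Fin 2) K) (μ : K) :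
    μ ∈ spectrum K M ↔ μ ^ 2 - M.trace * μ + M.det = 0 := by
  simp [mem_spectrum_iff_isRoot_charpoly, charpoly_fin_two]

theorem trace_sub_mul_fin_two (A : Matrix (Fin 2) (Fin 2) K) (L : Matrix (Fin 2) (Fin 1) K)
    (C : Matrix (Fin 1) (Fin 2) K) :
    (A - L * C).trace = A.trace - (L 0 0 * C 0 0 + L 1 0 * C 0 1) := by
  simp [trace_fin_two, mul_apply]

theorem det_sub_mul_fin_two (A : Matrix (Fin 2) (Fin 2) K) (L : Matrix (Fin 2) (Fin 1) K)
    (C : Matrix (Fin 1) (Fin 2) K) :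
    (A - L * C).det = A.det - (L 0 0 * (C 0 0 * A 1 1 - C 0 1 * A 1 0)
      + L 1 0 * (C 0 1 * A 0 0 - C 0 0 * A 0 1)) := by
  simp [det_fin_two, mul_apply]
  ring

theorem exists_trace_det_sub_mul_eq (A : Matrix (Fin 2) (Fin 2) K) (C : Matrix (Fin 1) (Fin 2) K)
    (hobs : IsUnit (!![C 0 0, C 0 1; (C * A) 0 0, (C * A) 0 1] : Matrix (Fin 2) (Fin 2) K))
    (t d : K) : ∃ L : Matrix (Fin 2) (Fin 1) K, (A - L * C).trace = t ∧ (A - L * C).det = d := by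
  set Δ := C 0 0 * (C 0 1 * A 0 0 - C 0 0 * A 0 1) - C 0 1 * (C 0 0 * A 1 1 - C 0 1 * A 1 0)
  have hΔ : Δ ≠ 0 := by
    have : C 0 0 * (C * A) 0 1 - C 0 1 * (C * A) 0 0 ≠ 0 := by
      simpa [isUnit_iff_isUnit_det, det_fin_two] using hobs
    contrapose! this
    simp only [mul_apply, Fin.sum_univ_two]
    linear_combination -this
  -- Cramer's rule for the affine system of `trace_sub_mul_fin_two` and `det_sub_mul_fin_two`.
  refine ⟨!![((A.trace - t) * (C 0 1 * A 0 0 - C 0 0 * A 0 1) - C 0 1 * (A.det - d)) / Δ;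
    (C 0 0 * (A.det - d) - (A.trace - t) * (C 0 0 * A 1 1 - C 0 1 * A 1 0)) / Δ], ?_, ?_⟩
  · simp only [trace_sub_mul_fin_two, of_apply, cons_val', cons_val_zero, cons_val_one,
      cons_val_fin_one, empty_val']
    field_simp
    ring
  · simp only [det_sub_mul_fin_two, of_apply, cons_val', cons_val_zero, cons_val_one,
      cons_val_fin_one, empty_val']
    field_simp
    ring

end Matrix

theorem stmt4 (A : Matrix (Fin 2) (Fin 2) ℝ) (C : Matrix (Fin 1) (Fin 2) ℝ)
    (hobs : IsUnit (!![C 0 0, C 0 1; (C * A) 0 0, (C * A) 0 1] : Matrix (Fin 2) (Fin 2) ℝ)) :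
    ∃ L : Matrix (Fin 2) (Fin 1) ℝ,
      ∀ μ : ℂ, μ ∈ spectrum ℂ ((A - L * C).map (Complex.ofReal)) → μ.re < 0 := by
  obtain ⟨L, htr, hdet⟩ := Matrix.exists_trace_det_sub_mul_eq A C hobs (-2) 1
  refine ⟨L, fun μ hμ => ?_⟩
  have htrC : ((A - L * C).map Complex.ofReal).trace = -2 :=
    (AddMonoidHom.map_trace Complex.ofRealHom _).symm.trans (by simp [htr])
  have hdetC : ((A - L * C).map Complex.ofReal).det = 1 :=
    (Complex.ofRealHom.map_det _).symm.trans (by simp [hdet])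
  rw [Matrix.mem_spectrum_iff_fin_two, htrC, hdetC] at hμ
  have hsq : (μ + 1) ^ 2 = 0 := by linear_combination hμ
  have hμ1 : μ = -1 := by linear_combination pow_eq_zero_iff two_ne_zero |>.mp hsq
  simp [hμ1]
end

section
/- Let b < 0 and let V₁(t) = ∫₀¹ (2−x)·μ̄(x,t)² dx where μ̄ solves μ̄_t = b·μ̄_x + X̃(t), μ̄(0,t) = 0, with X̃ ∈ L²(0,∞) ∩ L^∞. Then V₁'(t) ≤ (b/4)·V₁(t) + (something proportional to X̃(t)²), and consequently √V₁ ∈ L²(0,∞) ∩ L^∞(0,∞). -/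
/-!
Differentiating under the integral and using the equation, `V₁'` is the integral of
`(2 - x) · 2μ̄ (b μ̄ₓ + X̃)`. Integrating the transport part by parts against the weight `2 - x`
gives `b (μ̄(1)² + ∫ μ̄²) ≤ (b/2) V₁`, the boundary term at `0` vanishing, and Young's inequality
absorbs the forcing into `-(b/4) V₁` at the cost of a multiple of `X̃²`. The resulting
dissipative inequality `V' ≤ a V + g` with `a < 0` and `g ≥ 0` integrable then bounds both
`V(T)` and `-a ∫₀ᵀ V` by `V(0) + ∫ g`.
-/

open MeasureTheory Set Function

section ParametricIntegral

variable {E : Type*} [NormedAddCommGroup E] [NormedSpace ℝ E]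

theorem hasDerivAt_intervalIntegral_of_continuous {F F' : ℝ → ℝ → E} {a b : ℝ}
    (hF : Continuous (uncurry F)) (hF' : Continuous (uncurry F'))
    (hderiv : ∀ t x, HasDerivAt (F · x) (F' t x) t) (t₀ : ℝ) :
    HasDerivAt (fun t => ∫ x in a..b, F t x) (∫ x in a..b, F' t₀ x) t₀ := by
  obtain ⟨C, hC⟩ := ((isCompact_closedBall t₀ 1).prod isCompact_uIcc).exists_bound_of_continuousOn
    hF'.continuousOn
  have hFt : ∀ t, Continuous (F t) := fun t => hF.comp (Continuous.prodMk_right t)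
  exact (intervalIntegral.hasDerivAt_integral_of_dominated_loc_of_deriv_le (bound := fun _ => C)
    (Metric.closedBall_mem_nhds t₀ one_pos) (.of_forall fun t => (hFt t).aestronglyMeasurable)
    ((hFt t₀).intervalIntegrable a b) (hF'.comp (Continuous.prodMk_right t₀)).aestronglyMeasurable
    (ae_of_all _ fun x hx t ht => hC (t, x) ⟨ht, uIoc_subset_uIcc hx⟩) intervalIntegrable_const
    (ae_of_all _ fun x _ t _ => hderiv t x)).2

end ParametricIntegral

section WeightedL2

variable {m m' : ℝ → ℝ}

theorem integral_two_sub_mul_deriv_sq (hm : ∀ x, HasDerivAt m (m' x) x) (hm' : Continuous m')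
    (hm0 : m 0 = 0) :
    ∫ x in (0:ℝ)..1, (2 - x) * (2 * m x * m' x) = m 1 ^ 2 + ∫ x in (0:ℝ)..1, m x ^ 2 := by
  have hmc : Continuous m := continuous_iff_continuousAt.2 fun x => (hm x).continuousAt
  have hftc := intervalIntegral.integral_eq_sub_of_hasDerivAt (a := 0) (b := 1)
    (f := fun x => (2 - x) * m x ^ 2) (f' := fun x => (2 - x) * (2 * m x * m' x) - m x ^ 2)
    (fun x _ => by
      have hsq : HasDerivAt (fun y => m y ^ 2) (2 * m x * m' x) x := by
        simpa using (hm x).fun_pow 2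
      exact (((hasDerivAt_id' x).const_sub 2).fun_mul hsq).congr_deriv (by ring))
    (Continuous.intervalIntegrable (by fun_prop) _ _)
  rw [intervalIntegral.integral_sub (Continuous.intervalIntegrable (by fun_prop) _ _)
    (Continuous.intervalIntegrable (by fun_prop) _ _)] at hftc
  simp only [hm0] at hftc
  linarith

theorem integral_two_sub_mul_sq_le (hm : Continuous m) :
    ∫ x in (0:ℝ)..1, (2 - x) * m x ^ 2 ≤ 2 * ∫ x in (0:ℝ)..1, m x ^ 2 := by
  rw [← intervalIntegral.integral_const_mul]
  exact intervalIntegral.integral_mono_on zero_le_one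
    (Continuous.intervalIntegrable (by fun_prop) _ _)
    (Continuous.intervalIntegrable (by fun_prop) _ _) fun x hx => mul_le_mul_of_nonneg_right (by linarith [hx.1]) (sq_nonneg _)

theorem integral_two_sub_mul_energy_deriv_le {b : ℝ} (hb : b < 0) (hm : ∀ x, HasDerivAt m (m' x) x)
    (hm' : Continuous m') (hm0 : m 0 = 0) (X : ℝ) :
    ∫ x in (0:ℝ)..1, (2 - x) * (2 * m x * (b * m' x + X))
      ≤ b / 4 * (∫ x in (0:ℝ)..1, (2 - x) * m x ^ 2) + 6 / (-b) * X ^ 2 := by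
  have hmc : Continuous m := continuous_iff_continuousAt.2 fun x => (hm x).continuousAt
  have hε : 0 < -b / 4 := by linarith
  -- Young's inequality `2 m X ≤ ε m² + ε⁻¹ X²` with `ε = -b/4` absorbs the forcing term.
  have hpointwise : ∀ x ∈ Icc (0:ℝ) 1, (2 - x) * (2 * m x * (b * m' x + X))
      ≤ b * ((2 - x) * (2 * m x * m' x)) + -b / 4 * ((2 - x) * m x ^ 2)
        + (-b / 4)⁻¹ * X ^ 2 * (2 - x) := by
    intro x hx
    have hyoung := two_mul_le_add_mul_sq (a := m x) (b := X) hε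
    have hw : 0 ≤ 2 - x := by linarith [hx.2]
    nlinarith [mul_le_mul_of_nonneg_left hyoung hw]
  have hweight : ∫ x in (0:ℝ)..1, (2 - x) = 3 / 2 := by
    rw [intervalIntegral.integral_sub intervalIntegrable_const
      intervalIntegral.intervalIntegrable_id]
    norm_num
  have hrhs : ∫ x in (0:ℝ)..1, (b * ((2 - x) * (2 * m x * m' x)) + -b / 4 * ((2 - x) * m x ^ 2)
        + (-b / 4)⁻¹ * X ^ 2 * (2 - x))
      = b * (m 1 ^ 2 + ∫ x in (0:ℝ)..1, m x ^ 2) + -b / 4 * (∫ x in (0:ℝ)..1, (2 - x) * m x ^ 2)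
        + 6 / (-b) * X ^ 2 := by
    rw [intervalIntegral.integral_add (Continuous.intervalIntegrable (by fun_prop) _ _)
        (Continuous.intervalIntegrable (by fun_prop) _ _),
      intervalIntegral.integral_add (Continuous.intervalIntegrable (by fun_prop) _ _)
        (Continuous.intervalIntegrable (by fun_prop) _ _),
      intervalIntegral.integral_const_mul, intervalIntegral.integral_const_mul,
      intervalIntegral.integral_const_mul, hweight, integral_two_sub_mul_deriv_sq hm hm' hm0]
    field_simp
    ring
  have hint := (intervalIntegral.integral_mono_on zero_le_one
    (Continuous.intervalIntegrable (by fun_prop) _ _)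
    (Continuous.intervalIntegrable (by fun_prop) _ _) hpointwise).trans_eq hrhs
  have h1 := mul_le_mul_of_nonpos_left (integral_two_sub_mul_sq_le hmc) (by linarith : b / 2 ≤ 0)
  have h2 := mul_nonpos_of_nonpos_of_nonneg hb.le (sq_nonneg (m 1))
  linear_combination hint + h1 + h2

end WeightedL2

section DissipativeInequality

variable {V V' g : ℝ → ℝ} {a : ℝ}

theorem sub_mul_integral_le_of_hasDerivAt_le (hV : ∀ t, HasDerivAt V (V' t) t)
    (hg : IntegrableOn g (Ici 0)) (hle : ∀ t, 0 ≤ t → V' t ≤ a * V t + g t) {T : ℝ} (hT : 0 ≤ T) :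
    V T - a * (∫ t in (0:ℝ)..T, V t) ≤ V 0 + ∫ t in (0:ℝ)..T, g t := by
  have hVc : Continuous V := continuous_iff_continuousAt.2 fun t => (hV t).continuousAt
  have hW : ∀ t, HasDerivAt (fun s => V s - a * ∫ u in (0:ℝ)..s, V u) (V' t - a * V t) t :=
    fun t => (hV t).sub ((hVc.integral_hasStrictDerivAt 0 t).hasDerivAt.const_mul a)
  have := intervalIntegral.sub_le_integral_of_hasDeriv_right_of_le hT
    (fun t _ => (hW t).continuousAt.continuousWithinAt) (fun t _ => (hW t).hasDerivWithinAt)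
    (hg.mono_set Icc_subset_Ici_self) (fun t ht => by linarith [hle t ht.1.le])
  simp only [intervalIntegral.integral_same, mul_zero, sub_zero] at this
  linarith

theorem integrableOn_Ici_and_bounded_of_hasDerivAt_le (ha : a < 0)
    (hV : ∀ t, HasDerivAt V (V' t) t) (hV0 : ∀ t, 0 ≤ t → 0 ≤ V t)
    (hg : IntegrableOn g (Ici 0)) (hg0 : ∀ t, 0 ≤ t → 0 ≤ g t)
    (hle : ∀ t, 0 ≤ t → V' t ≤ a * V t + g t) :
    IntegrableOn V (Ici 0) ∧ ∃ M, ∀ t, 0 ≤ t → V t ≤ M := by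
  have hVc : Continuous V := continuous_iff_continuousAt.2 fun t => (hV t).continuousAt
  have hG : ∀ T, 0 ≤ T → ∫ t in (0:ℝ)..T, g t ≤ ∫ t in Ici 0, g t := fun T hT => by
    rw [intervalIntegral.integral_of_le hT]
    exact setIntegral_mono_set hg ((ae_restrict_iff' measurableSet_Ici).2 (.of_forall hg0))
      (Ioc_subset_Ioi_self.trans Ioi_subset_Ici_self).eventuallyLE
  have hVint : ∀ T, 0 ≤ T → 0 ≤ ∫ t in (0:ℝ)..T, V t := fun T hT =>
    intervalIntegral.integral_nonneg hT fun t ht => hV0 t ht.1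
  have hbound := fun T hT => sub_mul_integral_le_of_hasDerivAt_le hV hg hle (T := T) hT
  refine ⟨?_, V 0 + ∫ t in Ici 0, g t, fun T hT => ?_⟩
  · rw [integrableOn_Ici_iff_integrableOn_Ioi]
    refine integrableOn_Ioi_of_intervalIntegral_norm_bounded ((V 0 + ∫ t in Ici 0, g t) / -a) 0
      (fun _ => hVc.integrableOn_Ioc) Filter.tendsto_id ?_
    filter_upwards [Filter.eventually_ge_atTop 0] with T hT
    have hnorm : ∫ t in (0:ℝ)..T, ‖V t‖ = ∫ t in (0:ℝ)..T, V t :=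
      intervalIntegral.integral_congr fun t ht => Real.norm_of_nonneg (hV0 t (uIcc_of_le hT ▸ ht).1)
    rw [id, hnorm, le_div_iff₀ (by linarith)]
    linarith [hbound T hT, hG T hT, hV0 T hT]
  · linarith [hbound T hT, hG T hT, mul_nonpos_of_nonpos_of_nonneg ha.le (hVint T hT)]

end DissipativeInequality

theorem stmt15_general (b : ℝ) (hb : b < 0)
    (μbar μbarx : ℝ → ℝ → ℝ) (Xt : ℝ → ℝ)
    (hcont : Continuous fun p : ℝ × ℝ => μbar p.1 p.2)
    (hcontx : Continuous fun p : ℝ × ℝ => μbarx p.1 p.2)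
    (hXL2 : MeasureTheory.IntegrableOn (fun t => (Xt t) ^ 2) (Set.Ici (0 : ℝ)))
    (hx : ∀ x t : ℝ, HasDerivAt (fun y => μbar y t) (μbarx x t) x)
    (ht : ∀ x t : ℝ, HasDerivAt (fun s => μbar x s) (b * μbarx x t + Xt t) t)
    (hbc : ∀ t : ℝ, μbar 0 t = 0)
    (V1 : ℝ → ℝ)
    (hV1 : ∀ t : ℝ, V1 t = ∫ x in (0 : ℝ)..1, (2 - x) * (μbar x t) ^ 2) :
    (∃ C : ℝ, 0 ≤ C ∧ ∃ V1' : ℝ → ℝ,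
      (∀ t : ℝ, 0 ≤ t → HasDerivAt V1 (V1' t) t) ∧
      (∀ t : ℝ, 0 ≤ t → V1' t ≤ (b / 4) * V1 t + C * (Xt t) ^ 2)) ∧
    MeasureTheory.IntegrableOn V1 (Set.Ici (0 : ℝ)) ∧
    (∃ M : ℝ, ∀ t : ℝ, 0 ≤ t → V1 t ≤ M) := by
  obtain rfl : V1 = _ := funext hV1
  -- The boundary condition forces `Xt = -b μbarx(0, ·)`, so the forcing is continuous.
  have hXt : Xt = fun t => -(b * μbarx 0 t) := funext fun t => by
    have h := ht 0 t
    simp only [hbc] at h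
    linarith [h.unique (hasDerivAt_const t 0)]
  have hμ : Continuous fun p : ℝ × ℝ => μbar p.2 p.1 := hcont.comp continuous_swap
  have hμx : Continuous fun p : ℝ × ℝ => μbarx p.2 p.1 := hcontx.comp continuous_swap
  have hXc : Continuous Xt := by
    rw [hXt]
    exact (hμx.comp (continuous_id.prodMk continuous_const)).const_mul b |>.neg
  have hC : 0 ≤ 6 / (-b) := div_nonneg (by norm_num) (by linarith)
  set D := fun t => ∫ x in (0:ℝ)..1, (2 - x) * (2 * μbar x t * (b * μbarx x t + Xt t))
  have hderiv : ∀ t, HasDerivAt (fun t => ∫ x in (0:ℝ)..1, (2 - x) * μbar x t ^ 2) (D t) t :=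
    hasDerivAt_intervalIntegral_of_continuous (F := fun t x => (2 - x) * μbar x t ^ 2)
      ((continuous_const.sub continuous_snd).mul (hμ.pow 2))
      ((continuous_const.sub continuous_snd).mul ((continuous_const.mul hμ).mul
        ((continuous_const.mul hμx).add (hXc.comp continuous_fst))))
      (fun t x => (((ht x t).fun_pow 2).const_mul (2 - x)).congr_deriv (by push_cast; ring))
  have hineq : ∀ t, D t ≤ b / 4 * (∫ x in (0:ℝ)..1, (2 - x) * μbar x t ^ 2) + 6 / (-b) * Xt t ^ 2 :=
    fun t => integral_two_sub_mul_energy_deriv_le hb (fun x => hx x t)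
      (hcontx.comp (continuous_id.prodMk continuous_const)) (hbc t) (Xt t)
  have hV0 : ∀ t, 0 ≤ ∫ x in (0:ℝ)..1, (2 - x) * μbar x t ^ 2 := fun t =>
    intervalIntegral.integral_nonneg zero_le_one fun x hx =>
      mul_nonneg (by linarith [hx.2]) (sq_nonneg _)
  exact ⟨⟨6 / (-b), hC, D, fun t _ => hderiv t, fun t _ => hineq t⟩,
    integrableOn_Ici_and_bounded_of_hasDerivAt_le (by linarith) hderiv (fun t _ => hV0 t)
      (hXL2.const_mul _) (fun t _ => mul_nonneg hC (sq_nonneg _)) fun t _ => hineq t⟩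

theorem stmt15 (b : ℝ) (hb : b < 0)
    (μbar μbarx : ℝ → ℝ → ℝ) (Xt : ℝ → ℝ)
    (hcont : Continuous fun p : ℝ × ℝ => μbar p.1 p.2)
    (hcontx : Continuous fun p : ℝ × ℝ => μbarx p.1 p.2)
    (hXL2 : MeasureTheory.IntegrableOn (fun t => (Xt t) ^ 2) (Set.Ici (0 : ℝ)))
    (hXLinf : ∃ M : ℝ, ∀ t : ℝ, 0 ≤ t → |Xt t| ≤ M)
    (hx : ∀ x t : ℝ, HasDerivAt (fun y => μbar y t) (μbarx x t) x)
    (ht : ∀ x t : ℝ, HasDerivAt (fun s => μbar x s) (b * μbarx x t + Xt t) t)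
    (hbc : ∀ t : ℝ, μbar 0 t = 0)
    (V1 : ℝ → ℝ)
    (hV1 : ∀ t : ℝ, V1 t = ∫ x in (0 : ℝ)..1, (2 - x) * (μbar x t) ^ 2) :
    (∃ C : ℝ, 0 ≤ C ∧ ∃ V1' : ℝ → ℝ,
      (∀ t : ℝ, 0 ≤ t → HasDerivAt V1 (V1' t) t) ∧
      (∀ t : ℝ, 0 ≤ t → V1' t ≤ (b / 4) * V1 t + C * (Xt t) ^ 2)) ∧
    MeasureTheory.IntegrableOn V1 (Set.Ici (0 : ℝ)) ∧
    (∃ M : ℝ, ∀ t : ℝ, 0 ≤ t → V1 t ≤ M) :=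
  stmt15_general b hb μbar μbarx Xt hcont hcontx hXL2 hx ht hbc V1 hV1
end
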